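/- Let X = Σ_{k=1}^r d_k h_k a_{τ_k}^T with the τ_k ∈ [0,1) pairwise distinct, all d_k ≠ 0, all h_k ≠ 0, and r ≤ min(n1, n2). Then the vectorized Hankel matrix H(X) has rank exactly r. -/

import Mathlib

/-!
With nodes `z k = exp (-2πi τ k)`, the Hankel lift factors as `H(X) = (C ⊙ P₁) * P₂ᵀ`, where
`Pₘ = (z k ^ i)` is the `m × r` matrix of powers of the nodes and `C ⊙ P₁` is the column-wise
Kronecker (Khatri–Rao) product with the coefficient vectors `d k • h k`. Distinct `τ k ∈ [0, 1)`
give distinct nodes, so for `r ≤ m` the top `r × r` block of `Pₘ` is an invertible Vandermonde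
matrix and `Pₘ` is injective. Since every column of `C` is nonzero, `C ⊙ P₁` is injective as well,
hence `rank H(X) = rank P₂ᵀ = r`.
-/

open Complex

def vhl (s n n1 n2 : ℕ) (hn : n1 + n2 = n + 1) (X : Matrix (Fin s) (Fin n) ℂ) :
    Matrix (Fin s × Fin n1) (Fin n2) ℂ :=
  fun pi j => X pi.1 ⟨pi.2.1 + j.1, by have h1 := pi.2.2; have h2 := j.2; omega⟩

noncomputable def aVec (n : ℕ) (τ : ℝ) : Fin n → ℂ :=
  fun j => Complex.exp (-2 * Real.pi * Complex.I * τ * j)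

open Matrix

namespace Matrix

variable {l m n R : Type*} [CommRing R]

def khatriRao (A : Matrix l n R) (B : Matrix m n R) : Matrix (l × m) n R :=
  of fun x k => A x.1 k * B x.2 k

def powCols {r : ℕ} (m : ℕ) (z : Fin r → R) : Matrix (Fin m) (Fin r) R :=
  of fun i k => z k ^ (i : ℕ)

lemma rank_mul_eq_right_of_mulVecLin_injective [Fintype m] [Fintype n]
    (A : Matrix l m R) (B : Matrix m n R) (hA : Function.Injective A.mulVecLin) :
    (A * B).rank = B.rank := by
  rw [rank, rank, mulVecLin_mul, LinearMap.range_comp,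
    ← (Submodule.equivMapOfInjective A.mulVecLin hA _).finrank_eq]

lemma khatriRao_mulVecLin_injective [Fintype n] [NoZeroDivisors R]
    {A : Matrix l n R} {B : Matrix m n R} (hA : ∀ k, ∃ p, A p k ≠ 0)
    (hB : Function.Injective B.mulVecLin) : Function.Injective (khatriRao A B).mulVecLin := by
  rw [← LinearMap.ker_eq_bot, LinearMap.ker_eq_bot'] at hB ⊢
  intro w hw
  have hcol : ∀ p k, A p k * w k = 0 := by
    intro p
    refine congrFun (hB (fun k => A p k * w k) (funext fun i => ?_))
    simpa [mulVec, dotProduct, khatriRao, mul_left_comm (B i _), mul_assoc] using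
      congrFun hw (p, i)
  funext k
  obtain ⟨p, hp⟩ := hA k
  exact (mul_eq_zero.mp (hcol p k)).resolve_left hp

variable [IsDomain R] {r : ℕ} {z : Fin r → R}

lemma powCols_mulVecLin_injective {m : ℕ} (hz : Function.Injective z) (hm : r ≤ m) :
    Function.Injective (powCols m z).mulVecLin := by
  rw [← LinearMap.ker_eq_bot, LinearMap.ker_eq_bot']
  intro w hw
  refine eq_zero_of_forall_pow_sum_mul_pow_eq_zero hz fun i => ?_
  simpa [mulVec, dotProduct, powCols, mul_comm] using congrFun hw (Fin.castLE hm i)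

lemma rank_powCols {m : ℕ} (hz : Function.Injective z) (hm : r ≤ m) :
    (powCols m z).rank = r := by
  rw [rank, LinearMap.finrank_range_of_inj (powCols_mulVecLin_injective hz hm),
    Module.finrank_fin_fun]

end Matrix

lemma vhl_sum_vecMulVec_pow {s n n1 n2 r : ℕ} (hn : n1 + n2 = n + 1)
    (c : Fin r → Fin s → ℂ) (z : Fin r → ℂ) :
    vhl s n n1 n2 hn (∑ k, vecMulVec (c k) fun j => z k ^ (j : ℕ)) =
      khatriRao (of c)ᵀ (powCols n1 z) * (powCols n2 z)ᵀ := by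
  ext ⟨p, i⟩ j
  simp [vhl, khatriRao, powCols, mul_apply, Matrix.sum_apply, vecMulVec_apply, pow_add, mul_assoc]

theorem rank_vhl_sum_vecMulVec_pow {s n n1 n2 r : ℕ} (hn : n1 + n2 = n + 1)
    {c : Fin r → Fin s → ℂ} {z : Fin r → ℂ} (hc : ∀ k, c k ≠ 0) (hz : Function.Injective z)
    (hr1 : r ≤ n1) (hr2 : r ≤ n2) :
    (vhl s n n1 n2 hn (∑ k, vecMulVec (c k) fun j => z k ^ (j : ℕ))).rank = r := by
  have hcol : ∀ k, ∃ p, (of c)ᵀ p k ≠ 0 := fun k => Function.ne_iff.mp (hc k)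
  rw [vhl_sum_vecMulVec_pow, rank_mul_eq_right_of_mulVecLin_injective _ _
    (khatriRao_mulVecLin_injective hcol (powCols_mulVecLin_injective hz hr1)),
    rank_transpose, rank_powCols hz hr2]

lemma injOn_exp_neg_two_pi_I_mul :
    Set.InjOn (fun t : ℝ => exp (-2 * Real.pi * I * t)) (Set.Ico 0 1) := by
  intro a ha b hb hab
  obtain ⟨m, hm⟩ := exp_eq_exp_iff_exists_int.mp hab
  have h2pi : 2 * (Real.pi : ℂ) * I ≠ 0 := by simp [Real.pi_ne_zero, I_ne_zero]
  have hm_eq : (m : ℝ) = b - a := by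
    apply ofReal_injective
    push_cast
    apply mul_left_cancel₀ h2pi
    linear_combination -hm
  have hm_lo : -1 < m := by exact_mod_cast (show (-1 : ℝ) < m by linarith [ha.2, hb.1])
  have hm_hi : m < 1 := by exact_mod_cast (show (m : ℝ) < 1 by linarith [ha.1, hb.2])
  have hm0 : m = 0 := by omega
  rw [hm0, Int.cast_zero] at hm_eq
  linarith

lemma aVec_eq_pow (n : ℕ) (τ : ℝ) :
    aVec n τ = fun j : Fin n => exp (-2 * Real.pi * I * τ) ^ (j : ℕ) := by
  funext j
  rw [aVec, ← exp_nat_mul]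
  ring_nf

theorem stmt2 (s n n1 n2 r : ℕ) (hn : n1 + n2 = n + 1)
    (d : Fin r → ℂ) (h : Fin r → Fin s → ℂ) (τ : Fin r → ℝ)
    (hd : ∀ k, d k ≠ 0) (hh : ∀ k, h k ≠ 0)
    (hτ : ∀ k, τ k ∈ Set.Ico (0 : ℝ) 1)
    (hdist : Function.Injective τ)
    (hr : r ≤ min n1 n2)
    (X : Matrix (Fin s) (Fin n) ℂ)
    (hX : X = ∑ k : Fin r, Matrix.vecMulVec (fun p => d k * h k p) (aVec n (τ k))) :
    (vhl s n n1 n2 hn X).rank = r := by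
  have hz : Function.Injective fun k => exp (-2 * Real.pi * I * τ k) :=
    fun k k' hkk' => hdist (injOn_exp_neg_two_pi_I_mul (hτ k) (hτ k') hkk')
  simp only [aVec_eq_pow] at hX
  subst hX
  exact rank_vhl_sum_vecMulVec_pow hn (fun k => smul_ne_zero (hd k) (hh k)) hz
    (le_min_iff.mp hr).1 (le_min_iff.mp hr).2
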